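/- arXiv:2512.11306 — 4 statements merged into one kernel-verified Lean document; each statement's English description precedes it below -/
import Mathlib

section
/- If the co-execution group is unsaturated, then a round-robin meta-iteration is feasible with cycle time s*: there exist start times ρ_j, τ_j ∈ ℝ for each j ∈ J such that the rollout intervals [ρ_j, ρ_j + r_j) are pairwise disjoint and contained in [0, s*), the training intervals [τ_j, τ_j + t_j) are pairwise disjoint and contained in [r_{j*}, r_{j*} + s*), ρ_j + r_j ≤ τ_j for every j ∈ J, and τ_j + t_j ≤ ρ_j + s* for every j ∈ J; in other words, there exists a period-s* schedule for the group. -/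
/-- If the co-execution group is unsaturated, then a round-robin
meta-iteration is feasible with cycle time `s*`: there exist start times `ρ j, τ j`
such that the rollout intervals `[ρ j, ρ j + r j)` are pairwise disjoint and
contained in `[0, s*)`, the training intervals `[τ j, τ j + t j)` are pairwise
disjoint and contained in `[r j*, r j* + s*)`, `ρ j + r j ≤ τ j` for every `j ∈ J`,
and `τ j + t j ≤ ρ j + s*` for every `j ∈ J`; in other words, there exists a
period-`s*` schedule for the group. -/
theorem unsaturated_roundRobin_feasible {ι : Type*} (J : Finset ι) (hJ : J.Nonempty)
    (r t : ι → ℝ) (hr : ∀ j ∈ J, 0 ≤ r j) (ht : ∀ j ∈ J, 0 ≤ t j)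
    (s : ι → ℝ) (hs : ∀ j, s j = r j + t j)
    (jstar : ι) (hjstar : jstar ∈ J) (hmax : ∀ j ∈ J, s j ≤ s jstar)
    (hunsat_r : ∑ j ∈ J, r j ≤ s jstar) (hunsat_t : ∑ j ∈ J, t j ≤ s jstar) :
    ∃ ρ τ : ι → ℝ,
      (∀ i ∈ J, ∀ j ∈ J, i ≠ j →
          Disjoint (Set.Ico (ρ i) (ρ i + r i)) (Set.Ico (ρ j) (ρ j + r j))) ∧
      (∀ j ∈ J, Set.Ico (ρ j) (ρ j + r j) ⊆ Set.Ico 0 (s jstar)) ∧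
      (∀ i ∈ J, ∀ j ∈ J, i ≠ j →
          Disjoint (Set.Ico (τ i) (τ i + t i)) (Set.Ico (τ j) (τ j + t j))) ∧
      (∀ j ∈ J, Set.Ico (τ j) (τ j + t j) ⊆ Set.Ico (r jstar) (r jstar + s jstar)) ∧
      (∀ j ∈ J, ρ j + r j ≤ τ j) ∧
      (∀ j ∈ J, τ j + t j ≤ ρ j + s jstar) := by
  classical
  letI : LinearOrder ι := IsWellOrder.linearOrder WellOrderingRel
  set f : ι → WithBot ι := fun k => if k = jstar then ⊥ else (k : WithBot ι) with hf
  have hfinj : ∀ i j : ι, i ≠ j → f i ≠ f j := by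
    intro i j hij h
    by_cases hi : i = jstar <;> by_cases hj : j = jstar <;>
      simp [hf, hi, hj] at h <;> simp_all
  have hfstar : ∀ j : ι, j ≠ jstar → f jstar < f j := by
    intro j hj
    simp [hf, hj, WithBot.bot_lt_coe]
  set A : ι → Finset ι := fun j => J.filter fun k => f k < f j with hA
  set ρ : ι → ℝ := fun j => ∑ k ∈ A j, r k with hρ
  set τ : ι → ℝ := fun j => r jstar + ∑ k ∈ A j, t k with hτ
  have hAsub : ∀ j, A j ⊆ J := fun j => Finset.filter_subset _ _
  have hjA : ∀ j, j ∉ A j := by intro j hj; simp [hA] at hj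
  have hmono : ∀ i ∈ J, ∀ j, f i < f j → insert i (A i) ⊆ A j := by
    intro i hi j hij k hk
    rcases Finset.mem_insert.mp hk with rfl | hk
    · exact Finset.mem_filter.mpr ⟨hi, hij⟩
    · rcases Finset.mem_filter.mp hk with ⟨hkJ, hki⟩
      exact Finset.mem_filter.mpr ⟨hkJ, hki.trans hij⟩
  have hρ_nonneg : ∀ j, 0 ≤ ρ j := by
    intro j
    exact Finset.sum_nonneg fun k hk => hr k (hAsub j hk)
  have hτA_nonneg : ∀ j, 0 ≤ ∑ k ∈ A j, t k := by
    intro j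
    exact Finset.sum_nonneg fun k hk => ht k (hAsub j hk)
  -- key sum bounds
  have hsum_r : ∀ j ∈ J, ρ j + r j ≤ ∑ k ∈ J, r k := by
    intro j hjJ
    have : ρ j + r j = ∑ k ∈ insert j (A j), r k := by
      rw [Finset.sum_insert (hjA j)]; ring
    rw [this]
    refine Finset.sum_le_sum_of_subset_of_nonneg ?_ fun k hk _ => hr k hk
    intro k hk
    rcases Finset.mem_insert.mp hk with rfl | hk
    · exact hjJ
    · exact hAsub j hk
  have hsum_t : ∀ j ∈ J, (∑ k ∈ A j, t k) + t j ≤ ∑ k ∈ J, t k := by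
    intro j hjJ
    have : (∑ k ∈ A j, t k) + t j = ∑ k ∈ insert j (A j), t k := by
      rw [Finset.sum_insert (hjA j)]; ring
    rw [this]
    refine Finset.sum_le_sum_of_subset_of_nonneg ?_ fun k hk _ => ht k hk
    intro k hk
    rcases Finset.mem_insert.mp hk with rfl | hk
    · exact hjJ
    · exact hAsub j hk
  have hAstar : A jstar = ∅ := by
    apply Finset.filter_false_of_mem
    intro k hk
    simp [hf]
  have hstar_mem : ∀ j ∈ J, j ≠ jstar → jstar ∈ A j :=
    fun j hjJ hne => Finset.mem_filter.mpr ⟨hjstar, hfstar j hne⟩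
  have hsstar := hs jstar
  have hcons : ∀ i ∈ J, ∀ j ∈ J, f i < f j → ρ i + r i ≤ ρ j := by
    intro i hi j hj hij
    have : ρ i + r i = ∑ k ∈ insert i (A i), r k := by
      rw [Finset.sum_insert (hjA i)]; ring
    rw [this]
    exact Finset.sum_le_sum_of_subset_of_nonneg (hmono i hi j hij)
      fun k hk _ => hr k (hAsub j hk)
  have hcons_t : ∀ i ∈ J, ∀ j ∈ J, f i < f j → τ i + t i ≤ τ j := by
    intro i hi j hj hij
    have h1 : (∑ k ∈ A i, t k) + t i = ∑ k ∈ insert i (A i), t k := by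
      rw [Finset.sum_insert (hjA i)]; ring
    have h2 : ∑ k ∈ insert i (A i), t k ≤ ∑ k ∈ A j, t k :=
      Finset.sum_le_sum_of_subset_of_nonneg (hmono i hi j hij)
        fun k hk _ => ht k (hAsub j hk)
    simp only [hτ]
    linarith
  refine ⟨ρ, τ, ?_, ?_, ?_, ?_, ?_, ?_⟩
  · intro i hi j hj hij
    rcases lt_or_gt_of_ne (hfinj i j hij) with h | h
    · have := hcons i hi j hj h
      rw [Set.disjoint_left]
      rintro x ⟨hx1, hx2⟩ ⟨hy1, hy2⟩
      linarith
    · have := hcons j hj i hi h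
      rw [Set.disjoint_left]
      rintro x ⟨hx1, hx2⟩ ⟨hy1, hy2⟩
      linarith
  · intro j hj x ⟨hx1, hx2⟩
    have h1 := hρ_nonneg j
    have h2 := hsum_r j hj
    constructor <;> linarith
  · intro i hi j hj hij
    rcases lt_or_gt_of_ne (hfinj i j hij) with h | h
    · have := hcons_t i hi j hj h
      rw [Set.disjoint_left]
      rintro x ⟨hx1, hx2⟩ ⟨hy1, hy2⟩
      linarith
    · have := hcons_t j hj i hi h
      rw [Set.disjoint_left]
      rintro x ⟨hx1, hx2⟩ ⟨hy1, hy2⟩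
      linarith
  · intro j hj x ⟨hx1, hx2⟩
    have h1 := hτA_nonneg j
    have h2 := hsum_t j hj
    simp only [hτ] at hx1 hx2
    constructor <;> linarith
  · intro j hj
    by_cases hje : j = jstar
    · subst hje
      simp [hρ, hτ, hAstar]
    · have h1 := hsum_r j hj
      have h2 : t jstar ≤ ∑ k ∈ A j, t k := by
        refine Finset.single_le_sum (fun k hk => ht k (hAsub j hk)) (hstar_mem j hj hje)
      simp only [hρ, hτ]
      simp only [hρ] at h1
      linarith
  · intro j hj
    by_cases hje : j = jstar
    · subst hje
      simp only [hρ, hτ, hAstar, Finset.sum_empty]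
      linarith
    · have h1 := hsum_t j hj
      have h2 : r jstar ≤ ∑ k ∈ A j, r k := by
        refine Finset.single_le_sum (fun k hk => hr k (hAsub j hk)) (hstar_mem j hj hje)
      simp only [hρ, hτ]
      linarith
end

section
/- Suppose the co-execution group is unsaturated, and let (j_1, j_2, …, j_n) be any enumeration of J with j_1 = j*. Define explicit round-robin start times ρ_{j_i} = ∑_{l < i} r_{j_l} and τ_{j_i} = r_{j*} + ∑_{l < i} t_{j_l} for i = 1, …, n. Then these start times form a period-s* schedule: the rollout intervals [ρ_{j_i}, ρ_{j_i} + r_{j_i}) are pairwise disjoint and contained in [0, s*); the training intervals [τ_{j_i}, τ_{j_i} + t_{j_i}) are pairwise disjoint and contained in [r_{j*}, r_{j*} + s*); ρ_{j_i} + r_{j_i} ≤ τ_{j_i} for every i; and τ_{j_i} + t_{j_i} ≤ ρ_{j_i} + s* for every i. -/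
/-!
Starting every phase right after the same phase of the previous job packs the rollouts into
`[0, ∑ r)` and the trainings into `[r*, r* + ∑ t)`, which unsaturation places inside `[0, s*)` and
`[r*, r* + s*)`. Job `j*` comes first and runs its two phases back to back. Every later job starts
its rollout after `r*` and its training after `r* + t* = s*`, while it finishes its rollout by `s*`
and its training by `r* + s*`; these two facts give both period constraints.
-/

open Finset Function

theorem pairwise_disjoint_Ico_of_le {α β : Type*} [LinearOrder α] [Preorder β] {a b : α → β}
    (h : ∀ i j, i < j → b i ≤ a j) :
    Pairwise (Disjoint on fun i => Set.Ico (a i) (b i)) :=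
  (pairwise_disjoint_on _).2 fun i j hij =>
    Set.disjoint_left.2 fun _ hi hj => (hi.2.trans_le (h i j hij)).not_ge hj.1

section OrderedSum

variable {M : Type*} [AddCommMonoid M] [PartialOrder M] [IsOrderedAddMonoid M]

theorem sum_comp_le_sum_of_injective {κ ι : Type*} [Fintype κ] {f : κ → ι}
    (hf : Function.Injective f) {J : Finset ι} (hfJ : ∀ k, f k ∈ J) {g : ι → M}
    (hg : ∀ j ∈ J, 0 ≤ g j) :
    ∑ k, g (f k) ≤ ∑ j ∈ J, g j := by
  classical
  rw [← sum_image hf.injOn]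
  exact sum_le_sum_of_subset_of_nonneg (image_subset_iff.2 fun k _ => hfJ k)
    fun j hj _ => hg j hj

variable {α : Type*} [LinearOrder α] [LocallyFiniteOrderBot α] {a : α → M}

theorem le_sum_Iio_of_lt (ha : ∀ l, 0 ≤ a l) {i j : α} (hij : i < j) :
    a i ≤ ∑ l ∈ Iio j, a l :=
  single_le_sum (fun l _ => ha l) (mem_Iio.2 hij)

variable {c : M} {x : α → M}

theorem add_le_of_lt_of_eq_add_sum_Iio (ha : ∀ l, 0 ≤ a l)
    (hx : ∀ i, x i = c + ∑ l ∈ Iio i, a l) {i j : α} (hij : i < j) : x i + a i ≤ x j := by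
  rw [hx, hx, add_assoc, sum_Iio_add_eq_sum_Iic]
  exact add_le_add_right (sum_le_sum_of_subset_of_nonneg
    (fun l hl => mem_Iio.2 ((mem_Iic.1 hl).trans_lt hij)) fun l _ _ => ha l) c

theorem pairwise_disjoint_Ico_of_eq_add_sum_Iio (ha : ∀ l, 0 ≤ a l)
    (hx : ∀ i, x i = c + ∑ l ∈ Iio i, a l) :
    Pairwise (Disjoint on fun i => Set.Ico (x i) (x i + a i)) :=
  pairwise_disjoint_Ico_of_le fun _ _ => add_le_of_lt_of_eq_add_sum_Iio ha hx

theorem add_le_add_sum_univ_of_eq_add_sum_Iio [Fintype α] (ha : ∀ l, 0 ≤ a l)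
    (hx : ∀ i, x i = c + ∑ l ∈ Iio i, a l) (i : α) :
    x i + a i ≤ c + ∑ l, a l := by
  rw [hx, add_assoc, sum_Iio_add_eq_sum_Iic]
  exact add_le_add_right (sum_le_univ_sum_of_nonneg ha) c

theorem Ico_subset_Ico_of_eq_add_sum_Iio [Fintype α] (ha : ∀ l, 0 ≤ a l)
    (hx : ∀ i, x i = c + ∑ l ∈ Iio i, a l) (i : α) :
    Set.Ico (x i) (x i + a i) ⊆ Set.Ico c (c + ∑ l, a l) :=
  Set.Ico_subset_Ico ((le_add_of_nonneg_right (sum_nonneg fun l _ => ha l)).trans_eq (hx i).symm)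
    (add_le_add_sum_univ_of_eq_add_sum_Iio ha hx i)

end OrderedSum

theorem roundRobin_explicit_schedule_general {ι : Type*} (J : Finset ι)
    (r t : ι → ℝ) (hr : ∀ j ∈ J, 0 ≤ r j) (ht : ∀ j ∈ J, 0 ≤ t j)
    (s : ι → ℝ) (hs : ∀ j, s j = r j + t j)
    (jstar : ι)
    (hunsat_r : ∑ j ∈ J, r j ≤ s jstar) (hunsat_t : ∑ j ∈ J, t j ≤ s jstar)
    (n : ℕ) (hn : 0 < n) (f : Fin n → ι)
    (hfinj : Function.Injective f)
    (hfmem : ∀ i : Fin n, f i ∈ J)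
    (hf0 : f ⟨0, hn⟩ = jstar)
    (ρ τ : Fin n → ℝ)
    (hρ : ∀ i : Fin n, ρ i = ∑ l ∈ Finset.Iio i, r (f l))
    (hτ : ∀ i : Fin n, τ i = r jstar + ∑ l ∈ Finset.Iio i, t (f l)) :
    (∀ i j : Fin n, i ≠ j →
        Disjoint (Set.Ico (ρ i) (ρ i + r (f i))) (Set.Ico (ρ j) (ρ j + r (f j)))) ∧
    (∀ i : Fin n, Set.Ico (ρ i) (ρ i + r (f i)) ⊆ Set.Ico 0 (s jstar)) ∧
    (∀ i j : Fin n, i ≠ j →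
        Disjoint (Set.Ico (τ i) (τ i + t (f i))) (Set.Ico (τ j) (τ j + t (f j)))) ∧
    (∀ i : Fin n, Set.Ico (τ i) (τ i + t (f i)) ⊆
        Set.Ico (r jstar) (r jstar + s jstar)) ∧
    (∀ i : Fin n, ρ i + r (f i) ≤ τ i) ∧
    (∀ i : Fin n, τ i + t (f i) ≤ ρ i + s jstar) := by
  have hr' (l : Fin n) : 0 ≤ r (f l) := hr _ (hfmem l)
  have ht' (l : Fin n) : 0 ≤ t (f l) := ht _ (hfmem l)
  have hρ' (i : Fin n) : ρ i = 0 + ∑ l ∈ Iio i, r (f l) := by rw [hρ, zero_add]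
  have hR : 0 + ∑ l, r (f l) ≤ s jstar := by
    rw [zero_add]; exact (sum_comp_le_sum_of_injective hfinj hfmem hr).trans hunsat_r
  have hT : r jstar + ∑ l, t (f l) ≤ r jstar + s jstar := by
    grw [sum_comp_le_sum_of_injective hfinj hfmem ht, hunsat_t]
  have hmin : IsMin (⟨0, hn⟩ : Fin n) := fun i _ => Nat.zero_le i.val
  have hphase (i : Fin n) : (ρ i = 0 ∧ τ i = r jstar ∧ f i = jstar) ∨
      (r jstar ≤ ρ i ∧ r jstar + t jstar ≤ τ i) := by
    rcases (show (⟨0, hn⟩ : Fin n) ≤ i from Nat.zero_le _).eq_or_lt with rfl | hi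
    · rw [hρ, hτ, Iio_eq_empty.2 hmin, sum_empty, sum_empty]
      exact Or.inl ⟨rfl, add_zero _, hf0⟩
    · rw [hρ, hτ, ← hf0]
      exact Or.inr ⟨le_sum_Iio_of_lt hr' hi,
        (add_le_add_iff_left _).2 (le_sum_Iio_of_lt ht' hi)⟩
  refine ⟨fun _ _ hij => pairwise_disjoint_Ico_of_eq_add_sum_Iio hr' hρ' hij,
    fun i => (Ico_subset_Ico_of_eq_add_sum_Iio hr' hρ' i).trans (Set.Ico_subset_Ico_right hR),
    fun _ _ hij => pairwise_disjoint_Ico_of_eq_add_sum_Iio ht' hτ hij,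
    fun i => (Ico_subset_Ico_of_eq_add_sum_Iio ht' hτ i).trans (Set.Ico_subset_Ico_right hT),
    fun i => ?_, fun i => ?_⟩
  · have := add_le_add_sum_univ_of_eq_add_sum_Iio hr' hρ' i
    rcases hphase i with ⟨hρi, hτi, hfi⟩ | ⟨hρi, hτi⟩
    · rw [hρi, hτi, hfi, zero_add]
    · linarith [hs jstar]
  · have := add_le_add_sum_univ_of_eq_add_sum_Iio ht' hτ i
    rcases hphase i with ⟨hρi, hτi, hfi⟩ | ⟨hρi, hτi⟩
    · rw [hρi, hτi, hfi]
      linarith [hs jstar]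
    · linarith

/-- Suppose the co-execution group is unsaturated, and let
`(j_1, …, j_n)` be any enumeration of `J` with `j_1 = j*` (here the enumeration is
the injective map `f : Fin n → ι` whose image is `J`, with `f 0 = j*`). Define the
explicit round-robin start times `ρ_{j_i} = ∑_{l < i} r (f l)` and
`τ_{j_i} = r j* + ∑_{l < i} t (f l)`. Then these start times form a period-`s*`
schedule: the rollout intervals are pairwise disjoint and contained in `[0, s*)`;
the training intervals are pairwise disjoint and contained in `[r j*, r j* + s*)`;
`ρ_{j_i} + r_{j_i} ≤ τ_{j_i}`; and `τ_{j_i} + t_{j_i} ≤ ρ_{j_i} + s*`. -/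
theorem roundRobin_explicit_schedule {ι : Type*} (J : Finset ι) (hJ : J.Nonempty)
    (r t : ι → ℝ) (hr : ∀ j ∈ J, 0 ≤ r j) (ht : ∀ j ∈ J, 0 ≤ t j)
    (s : ι → ℝ) (hs : ∀ j, s j = r j + t j)
    (jstar : ι) (hjstar : jstar ∈ J) (hmax : ∀ j ∈ J, s j ≤ s jstar)
    (hunsat_r : ∑ j ∈ J, r j ≤ s jstar) (hunsat_t : ∑ j ∈ J, t j ≤ s jstar)
    (n : ℕ) (hn : 0 < n) (f : Fin n → ι)
    (hfinj : Function.Injective f)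
    (hfmem : ∀ i : Fin n, f i ∈ J) (hfsurj : ∀ j ∈ J, ∃ i : Fin n, f i = j)
    (hf0 : f ⟨0, hn⟩ = jstar)
    (ρ τ : Fin n → ℝ)
    (hρ : ∀ i : Fin n, ρ i = ∑ l ∈ Finset.Iio i, r (f l))
    (hτ : ∀ i : Fin n, τ i = r jstar + ∑ l ∈ Finset.Iio i, t (f l)) :
    (∀ i j : Fin n, i ≠ j →
        Disjoint (Set.Ico (ρ i) (ρ i + r (f i))) (Set.Ico (ρ j) (ρ j + r (f j)))) ∧
    (∀ i : Fin n, Set.Ico (ρ i) (ρ i + r (f i)) ⊆ Set.Ico 0 (s jstar)) ∧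
    (∀ i j : Fin n, i ≠ j →
        Disjoint (Set.Ico (τ i) (τ i + t (f i))) (Set.Ico (τ j) (τ j + t (f j)))) ∧
    (∀ i : Fin n, Set.Ico (τ i) (τ i + t (f i)) ⊆
        Set.Ico (r jstar) (r jstar + s jstar)) ∧
    (∀ i : Fin n, ρ i + r (f i) ≤ τ i) ∧
    (∀ i : Fin n, τ i + t (f i) ≤ ρ i + s jstar) :=
  roundRobin_explicit_schedule_general J r t hr ht s hs jstar hunsat_r hunsat_t n hn f hfinj hfmem
    hf0 ρ τ hρ hτ
end

section
/- If the co-execution group is unsaturated, then the minimum achievable period of a schedule for the group is exactly s*: there exists a period-s* schedule, and every period-T schedule has T ≥ s*. Consequently the round-robin schedule, which executes each job's rollout and training phase exactly once per cycle, completes all required work in the shortest possible cycle time. -/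
/-!
Executing the jobs in one fixed order, with `j*` first, and packing rollouts back to back from
time `0` and trainings back to back from time `r_{j*}` gives a period-`s*` schedule: every
rollout ends by `∑ r ≤ s*`, when every training other than that of `j*` starts, and every training
ends by `r_{j*} + ∑ t ≤ r_{j*} + s*`, when every next-period rollout other than that of `j*` has
started. Conversely a single job already needs `r_j + t_j ≤ T`.
-/

/-- A period-`T` schedule for the co-execution group `J` with rollout durations `r`,
training durations `t`, rollout start times `ρ` and training start times `τ`. -/
def IsPeriodSchedule {ι : Type*} (J : Finset ι) (r t : ι → ℝ) (T : ℝ)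
    (ρ τ : ι → ℝ) : Prop :=
  (∀ i ∈ J, ∀ j ∈ J, i ≠ j →
      Disjoint (Set.Ico (ρ i) (ρ i + r i)) (Set.Ico (ρ j) (ρ j + r j))) ∧
  (∀ j ∈ J, Set.Ico (ρ j) (ρ j + r j) ⊆ Set.Ico 0 T) ∧
  (∀ i ∈ J, ∀ j ∈ J, i ≠ j →
      Disjoint (Set.Ico (τ i) (τ i + t i)) (Set.Ico (τ j) (τ j + t j))) ∧
  (∃ a : ℝ, ∀ j ∈ J, Set.Ico (τ j) (τ j + t j) ⊆ Set.Ico a (a + T)) ∧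
  (∀ j ∈ J, ρ j + r j ≤ τ j) ∧
  (∀ j ∈ J, τ j + t j ≤ ρ j + T)

open Finset

section

variable {ι : Type*}

theorem IsPeriodSchedule.add_le_period {J : Finset ι} {r t : ι → ℝ} {T : ℝ} {ρ τ : ι → ℝ}
    (h : IsPeriodSchedule J r t T ρ τ) {j : ι} (hj : j ∈ J) : r j + t j ≤ T := by
  linarith [h.2.2.2.2.1 j hj, h.2.2.2.2.2 j hj]

theorem exists_injOn_nat_lt_of_ne (J : Finset ι) (j₀ : ι) :
    ∃ key : ι → ℕ, Set.InjOn key J ∧ ∀ j, j ≠ j₀ → key j₀ < key j := by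
  classical
  obtain ⟨f, hf⟩ := Set.countable_iff_exists_injOn.1 J.countable_toSet
  refine ⟨Function.update (fun j => f j + 1) j₀ 0, ?_, fun j hj => by simp [hj]⟩
  intro i hi j hj hij
  by_cases hi₀ : i = j₀ <;> by_cases hj₀ : j = j₀ <;> simp_all [hf.eq_iff]

theorem pairwise_disjoint_Ico_of_injOn {J : Finset ι} {key : ι → ℕ} (hkey : Set.InjOn key J)
    {start d : ι → ℝ} (hstart : ∀ i ∈ J, ∀ j ∈ J, key i < key j → start i + d i ≤ start j) :
    ∀ i ∈ J, ∀ j ∈ J, i ≠ j →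
      Disjoint (Set.Ico (start i) (start i + d i)) (Set.Ico (start j) (start j + d j)) := by
  intro i hi j hj hij
  rcases lt_trichotomy (key i) (key j) with hlt | heq | hgt
  · exact Set.Ico_disjoint_Ico_same.mono_right (Set.Ico_subset_Ico_left (hstart i hi j hj hlt))
  · exact absurd (hkey hi hj heq) hij
  · exact (Set.Ico_disjoint_Ico_same.mono_right
      (Set.Ico_subset_Ico_left (hstart j hj i hi hgt))).symm

def sequentialStart (J : Finset ι) (key : ι → ℕ) (d : ι → ℝ) (j : ι) : ℝ :=
  ∑ i ∈ J with key i < key j, d i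

section SequentialStart

variable {J : Finset ι} {key : ι → ℕ} {d : ι → ℝ}

theorem sequentialStart_nonneg (hd : ∀ i ∈ J, 0 ≤ d i) (j : ι) :
    0 ≤ sequentialStart J key d j :=
  sum_nonneg fun i hi => hd i (mem_filter.1 hi).1

theorem sequentialStart_add_le_sum_of_subset (hd : ∀ i ∈ J, 0 ≤ d i) {s : Finset ι}
    (hs : s ⊆ J) {j : ι} (hj : j ∈ s) (hbefore : ∀ i ∈ J, key i < key j → i ∈ s) :
    sequentialStart J key d j + d j ≤ ∑ i ∈ s, d i := by
  classical
  have hnotMem : j ∉ {i ∈ J | key i < key j} := by simp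
  calc sequentialStart J key d j + d j = ∑ i ∈ insert j {i ∈ J | key i < key j}, d i := by
        rw [sum_insert hnotMem, add_comm, sequentialStart]
    _ ≤ ∑ i ∈ s, d i := by
        refine sum_le_sum_of_subset_of_nonneg ?_ fun i hi _ => hd i (hs hi)
        exact insert_subset hj fun i hi => hbefore i (mem_filter.1 hi).1 (mem_filter.1 hi).2

theorem sequentialStart_add_le_sum (hd : ∀ i ∈ J, 0 ≤ d i) {j : ι} (hj : j ∈ J) :
    sequentialStart J key d j + d j ≤ ∑ i ∈ J, d i :=
  sequentialStart_add_le_sum_of_subset hd subset_rfl hj fun _ hi _ => hi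

theorem sequentialStart_add_le (hd : ∀ i ∈ J, 0 ≤ d i) {i j : ι} (hi : i ∈ J)
    (hij : key i < key j) : sequentialStart J key d i + d i ≤ sequentialStart J key d j :=
  sequentialStart_add_le_sum_of_subset hd (filter_subset _ _) (mem_filter.2 ⟨hi, hij⟩)
    fun _ hk hki => mem_filter.2 ⟨hk, hki.trans hij⟩

theorem le_sequentialStart (hd : ∀ i ∈ J, 0 ≤ d i) {i j : ι} (hi : i ∈ J)
    (hij : key i < key j) : d i ≤ sequentialStart J key d j := by
  linarith [sequentialStart_add_le (key := key) hd hi hij, sequentialStart_nonneg (key := key) hd i]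

theorem sequentialStart_eq_zero {j₀ : ι} (hfirst : ∀ j, j ≠ j₀ → key j₀ < key j) :
    sequentialStart J key d j₀ = 0 := by
  refine sum_eq_zero fun i hi => absurd (mem_filter.1 hi).2 ?_
  by_cases hi₀ : i = j₀
  · simp [hi₀]
  · exact (hfirst i hi₀).not_gt

end SequentialStart

theorem isPeriodSchedule_sequentialStart {J : Finset ι} {r t : ι → ℝ}
    (hr : ∀ j ∈ J, 0 ≤ r j) (ht : ∀ j ∈ J, 0 ≤ t j) {j₀ : ι} (hj₀ : j₀ ∈ J)
    (hsum_r : ∑ j ∈ J, r j ≤ r j₀ + t j₀) (hsum_t : ∑ j ∈ J, t j ≤ r j₀ + t j₀)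
    {key : ι → ℕ} (hkey : Set.InjOn key J) (hfirst : ∀ j, j ≠ j₀ → key j₀ < key j) :
    IsPeriodSchedule J r t (r j₀ + t j₀) (sequentialStart J key r)
      (fun j => r j₀ + sequentialStart J key t j) := by
  have hρ₀ : sequentialStart J key r j₀ = 0 := sequentialStart_eq_zero hfirst
  have hτ₀ : sequentialStart J key t j₀ = 0 := sequentialStart_eq_zero hfirst
  have hρ_end (j) (hj : j ∈ J) := sequentialStart_add_le_sum (key := key) hr hj
  have hτ_end (j) (hj : j ∈ J) := sequentialStart_add_le_sum (key := key) ht hj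
  refine ⟨?_, fun j hj => ?_, ?_, ⟨r j₀, fun j hj => ?_⟩, fun j hj => ?_, fun j hj => ?_⟩
  · exact pairwise_disjoint_Ico_of_injOn hkey fun i hi j _ hij => sequentialStart_add_le hr hi hij
  · exact Set.Ico_subset_Ico (sequentialStart_nonneg hr j) ((hρ_end j hj).trans hsum_r)
  · refine pairwise_disjoint_Ico_of_injOn hkey fun i hi j _ hij => ?_
    linarith [sequentialStart_add_le (key := key) ht hi hij]
  · refine Set.Ico_subset_Ico ?_ (by linarith [hτ_end j hj])
    linarith [sequentialStart_nonneg (key := key) ht j]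
  · by_cases hne : j = j₀
    · subst hne; linarith
    · linarith [hρ_end j hj, le_sequentialStart (key := key) ht hj₀ (hfirst j hne)]
  · by_cases hne : j = j₀
    · subst hne; linarith
    · linarith [hτ_end j hj, le_sequentialStart (key := key) hr hj₀ (hfirst j hne)]

end

theorem minimum_period_eq_sstar_general {ι : Type*} (J : Finset ι)
    (r t : ι → ℝ) (hr : ∀ j ∈ J, 0 ≤ r j) (ht : ∀ j ∈ J, 0 ≤ t j)
    (s : ι → ℝ) (hs : ∀ j, s j = r j + t j)
    (jstar : ι) (hjstar : jstar ∈ J)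
    (hunsat_r : ∑ j ∈ J, r j ≤ s jstar) (hunsat_t : ∑ j ∈ J, t j ≤ s jstar) :
    (∃ ρ τ : ι → ℝ, IsPeriodSchedule J r t (s jstar) ρ τ) ∧
    (∀ (T : ℝ) (ρ τ : ι → ℝ), IsPeriodSchedule J r t T ρ τ → s jstar ≤ T) := by
  rw [hs jstar] at hunsat_r hunsat_t ⊢
  obtain ⟨key, hkey, hfirst⟩ := exists_injOn_nat_lt_of_ne J jstar
  exact ⟨⟨_, _, isPeriodSchedule_sequentialStart hr ht hjstar hunsat_r hunsat_t hkey hfirst⟩,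
    fun _ _ _ h => h.add_le_period hjstar⟩

/-- If the co-execution group is unsaturated, then the minimum
achievable period of a schedule for the group is exactly `s*`: there exists a
period-`s*` schedule, and every period-`T` schedule has `T ≥ s*`. -/
theorem minimum_period_eq_sstar {ι : Type*} (J : Finset ι) (hJ : J.Nonempty)
    (r t : ι → ℝ) (hr : ∀ j ∈ J, 0 ≤ r j) (ht : ∀ j ∈ J, 0 ≤ t j)
    (s : ι → ℝ) (hs : ∀ j, s j = r j + t j)
    (jstar : ι) (hjstar : jstar ∈ J) (hmax : ∀ j ∈ J, s j ≤ s jstar)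
    (hunsat_r : ∑ j ∈ J, r j ≤ s jstar) (hunsat_t : ∑ j ∈ J, t j ≤ s jstar) :
    (∃ ρ τ : ι → ℝ, IsPeriodSchedule J r t (s jstar) ρ τ) ∧
    (∀ (T : ℝ) (ρ τ : ι → ℝ), IsPeriodSchedule J r t T ρ τ → s jstar ≤ T) :=
  minimum_period_eq_sstar_general J r t hr ht s hs jstar hjstar hunsat_r hunsat_t
end

section
/- (Utilization optimality against arbitrary repetitions.) Suppose s* > 0 and j* ∈ J (so W ≥ s*). For every function n : J → ℕ with n_j ≥ 1 for all j ∈ J, and every real T with T ≥ s* + ∑_{j ∈ J} (n_j − 1) s_j (each extra execution of a job's phases prolongs the cycle time by at least that job's solo time), the aggregate utilization of a cycle executing job j's phases n_j times satisfies (∑_{j ∈ J} n_j s_j)/T ≤ W/s*. Thus the round-robin schedule, which takes n_j = 1 for all j, maximizes aggregate utilization. -/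
/-- **Utilization optimality against arbitrary repetitions.**
Suppose `s* > 0` and `j* ∈ J` (so `W ≥ s*`). For every function `n : J → ℕ` with
`n j ≥ 1` for all `j ∈ J`, and every real `T` with
`T ≥ s* + ∑_{j ∈ J} (n j − 1) * s j` (each extra execution of a job's phases
prolongs the cycle time by at least that job's solo time), the aggregate
utilization of a cycle executing job `j`'s phases `n j` times satisfies
`(∑_{j ∈ J} n j * s j)/T ≤ W/s*`. -/
theorem roundRobin_utilization_optimal {ι : Type*} (J : Finset ι) (hJ : J.Nonempty)
    (r t : ι → ℝ) (hr : ∀ j ∈ J, 0 ≤ r j) (ht : ∀ j ∈ J, 0 ≤ t j)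
    (s : ι → ℝ) (hs : ∀ j, s j = r j + t j)
    (jstar : ι) (hjstar : jstar ∈ J) (hmax : ∀ j ∈ J, s j ≤ s jstar)
    (hpos : 0 < s jstar)
    (n : ι → ℕ) (hn : ∀ j ∈ J, 1 ≤ n j)
    (T : ℝ) (hT : s jstar + ∑ j ∈ J, ((n j : ℝ) - 1) * s j ≤ T) :
    (∑ j ∈ J, (n j : ℝ) * s j) / T ≤ (∑ j ∈ J, s j) / s jstar := by
  set W : ℝ := ∑ j ∈ J, s j with hW
  set E : ℝ := ∑ j ∈ J, ((n j : ℝ) - 1) * s j with hE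
  have hsnn : ∀ j ∈ J, 0 ≤ s j := fun j hj => by
    rw [hs j]; exact add_nonneg (hr j hj) (ht j hj)
  have hEnn : 0 ≤ E := Finset.sum_nonneg fun j hj =>
    mul_nonneg (by have := hn j hj; simp [sub_nonneg]; exact_mod_cast this) (hsnn j hj)
  have hWs : s jstar ≤ W := Finset.single_le_sum hsnn hjstar
  have hnum : (∑ j ∈ J, (n j : ℝ) * s j) = W + E := by
    rw [hW, hE, ← Finset.sum_add_distrib]
    apply Finset.sum_congr rfl
    intro j hj; ring
  have hTpos : 0 < T := lt_of_lt_of_le (by linarith) hT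
  rw [hnum, div_le_div_iff₀ hTpos hpos]
  have h1 : (W + E) * s jstar ≤ (s jstar + E) * W := by nlinarith
  have h2 : (s jstar + E) * W ≤ W * T := by
    have hWnn : 0 ≤ W := le_trans hpos.le hWs
    nlinarith
  linarith
end
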